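/- arXiv:1711.10530 — 2 statements merged into one kernel-verified Lean document; each statement's English description precedes it below -/
import Mathlib

section
/- Let f : [0,1] → ℝ be continuous and let ψ : I𝔻 → I𝔻 be a monotone interval function (J ⊆ J' implies ψ(J) ⊆ ψ(J')) such that for every x ∈ [0,1] and every nested sequence of dyadic intervals (J_n) with ⋂_n J_n = {x}, the sequence (ψ(J_n)) is nested with ⋂_n ψ(J_n) = {f(x)}. Then for every n ∈ ℕ there exists N ∈ ℕ such that for all dyadic intervals J ⊆ [0,1] with diameter at most 2^{-N}, the interval ψ(J) has diameter at most 2^{-n}. -/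
/-- A closed interval of reals with dyadic rational endpoints. -/
structure DI where
  lo : ℝ
  hi : ℝ
  dyadic_lo : ∃ (r : ℤ) (n : ℕ), lo = (r : ℝ) / 2 ^ n
  dyadic_hi : ∃ (r : ℤ) (n : ℕ), hi = (r : ℝ) / 2 ^ n
  lo_le_hi : lo ≤ hi

/-- The set of reals belonging to a dyadic interval. -/
def DI.set (J : DI) : Set ℝ := Set.Icc J.lo J.hi

/-- The diameter of a dyadic interval. -/
def DI.diam (J : DI) : ℝ := J.hi - J.lo

/-- An interval function is monotone if it respects inclusion of intervals. -/
def IntervalMonotone (ψ : DI → DI) : Prop :=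
  ∀ J J' : DI, J.set ⊆ J'.set → (ψ J).set ⊆ (ψ J').set

/-- `ψ` realizes `f : [0,1] → ℝ` as an interval function: it maps every nested
sequence of dyadic intervals with intersection `{x}` (for `x ∈ [0,1]`) to a nested
sequence of dyadic intervals with intersection `{f x}`. -/
def Realizes (ψ : DI → DI) (f : ℝ → ℝ) : Prop :=
  ∀ x ∈ Set.Icc (0 : ℝ) 1, ∀ J : ℕ → DI,
    (∀ n, (J (n + 1)).set ⊆ (J n).set) → (⋂ n, (J n).set) = {x} →
      (∀ n, (ψ (J (n + 1))).set ⊆ (ψ (J n)).set) ∧ (⋂ n, (ψ (J n)).set) = {f x}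

noncomputable def Kint (x : ℝ) (m : ℕ) : DI where
  lo := ((⌊x * 2 ^ m⌋ : ℝ) - 1) / 2 ^ m
  hi := ((⌊x * 2 ^ m⌋ : ℝ) + 2) / 2 ^ m
  dyadic_lo := ⟨⌊x * 2 ^ m⌋ - 1, m, by push_cast; ring⟩
  dyadic_hi := ⟨⌊x * 2 ^ m⌋ + 2, m, by push_cast; ring⟩
  lo_le_hi := by
    apply div_le_div_of_nonneg_right ?_ (by positivity)
    linarith

lemma Kint_lo_le (x : ℝ) (m : ℕ) : (Kint x m).lo ≤ x - (1/2 : ℝ) ^ m := by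
  have h := Int.floor_le (x * 2 ^ m)
  have h2 : (0:ℝ) < 2 ^ m := by positivity
  rw [Kint, div_le_iff₀ h2]
  rw [sub_mul, one_div, inv_pow, inv_mul_cancel₀ (ne_of_gt h2)]
  linarith

lemma Kint_lo_ge (x : ℝ) (m : ℕ) : x - 2 * (1/2 : ℝ) ^ m ≤ (Kint x m).lo := by
  have h := Int.lt_floor_add_one (x * 2 ^ m)
  have h2 : (0:ℝ) < 2 ^ m := by positivity
  rw [Kint, le_div_iff₀ h2, sub_mul, mul_assoc, one_div, inv_pow,
    inv_mul_cancel₀ (ne_of_gt h2)]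
  linarith

lemma Kint_hi_ge (x : ℝ) (m : ℕ) : x + (1/2 : ℝ) ^ m ≤ (Kint x m).hi := by
  have h := Int.lt_floor_add_one (x * 2 ^ m)
  have h2 : (0:ℝ) < 2 ^ m := by positivity
  rw [Kint, le_div_iff₀ h2, add_mul, one_div, inv_pow, inv_mul_cancel₀ (ne_of_gt h2)]
  linarith

lemma Kint_hi_le (x : ℝ) (m : ℕ) : (Kint x m).hi ≤ x + 2 * (1/2 : ℝ) ^ m := by
  have h := Int.floor_le (x * 2 ^ m)
  have h2 : (0:ℝ) < 2 ^ m := by positivity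
  rw [Kint, div_le_iff₀ h2, add_mul, mul_assoc, one_div, inv_pow,
    inv_mul_cancel₀ (ne_of_gt h2)]
  linarith

lemma Kint_subset (x : ℝ) (m : ℕ) :
    Set.Icc (x - (1/2:ℝ)^m) (x + (1/2:ℝ)^m) ⊆ (Kint x m).set :=
  Set.Icc_subset_Icc (Kint_lo_le x m) (Kint_hi_ge x m)

lemma Kint_supset (x : ℝ) (m : ℕ) :
    (Kint x m).set ⊆ Set.Icc (x - 2*(1/2:ℝ)^m) (x + 2*(1/2:ℝ)^m) :=
  Set.Icc_subset_Icc (Kint_lo_ge x m) (Kint_hi_le x m)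

lemma Kint_nested (x : ℝ) (m : ℕ) : (Kint x (m+1)).set ⊆ (Kint x m).set := by
  refine (Kint_supset x (m+1)).trans ?_
  refine Set.Subset.trans ?_ (Kint_subset x m)
  have : 2 * (1/2:ℝ)^(m+1) = (1/2:ℝ)^m := by ring
  rw [this]

lemma Kint_mem (x : ℝ) (m : ℕ) : x ∈ (Kint x m).set := by
  have : (0:ℝ) < (1/2:ℝ)^m := by positivity
  exact Kint_subset x m ⟨by linarith, by linarith⟩

lemma Kint_iInter (x : ℝ) : (⋂ m, (Kint x m).set) = {x} := by
  ext y
  simp only [Set.mem_iInter, Set.mem_singleton_iff]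
  constructor
  · intro h
    by_contra hne
    have hpos : 0 < |y - x| / 2 := by
      apply div_pos _ two_pos
      exact abs_pos.mpr (sub_ne_zero.mpr hne)
    obtain ⟨m, hm⟩ := exists_pow_lt_of_lt_one hpos (by norm_num : (1/2:ℝ) < 1)
    have h2 := Kint_supset x m (h m)
    have h3 : |y - x| ≤ 2 * (1/2:ℝ)^m := abs_sub_le_iff.mpr
      ⟨by linarith [h2.2], by linarith [h2.1]⟩
    linarith
  · intro h m; rw [h]; exact Kint_mem x m

lemma Icc_subset_bounds {a b a' b' : ℝ} (h : a' ≤ b')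
    (hsub : Set.Icc a' b' ⊆ Set.Icc a b) : a ≤ a' ∧ b' ≤ b := by
  have h1 := hsub (Set.left_mem_Icc.mpr h)
  have h2 := hsub (Set.right_mem_Icc.mpr h)
  exact ⟨h1.1, h2.2⟩

lemma shrink (K : ℕ → DI) (c : ℝ)
    (hnest : ∀ m, (K (m+1)).set ⊆ (K m).set)
    (hint : (⋂ m, (K m).set) = {c}) {ε : ℝ} (hε : 0 < ε) :
    ∃ m, (K m).diam ≤ ε := by
  have hanti : ∀ m k, m ≤ k → (K k).set ⊆ (K m).set := by
    intro m k h
    induction k with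
    | zero => simp_all
    | succ k ih =>
      rcases Nat.lt_or_ge m (k+1) with h' | h'
      · exact (hnest k).trans (ih (Nat.lt_succ_iff.mp h'))
      · have : m = k + 1 := le_antisymm h h'
        subst this; exact subset_rfl
  have hc : ∀ m, c ∈ (K m).set := by
    intro m
    have : c ∈ ⋂ m, (K m).set := by rw [hint]; rfl
    exact Set.mem_iInter.mp this m
  have hbound : ∀ m k, (K m).lo ≤ (K k).hi := by
    intro m k
    exact le_trans (hc m).1 (hc k).2
  -- sup of lo's
  have hlo_mono : ∀ m k, m ≤ k → (K m).lo ≤ (K k).lo := by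
    intro m k h
    exact (Icc_subset_bounds (K k).lo_le_hi (hanti m k h)).1
  have hhi_mono : ∀ m k, m ≤ k → (K k).hi ≤ (K m).hi := by
    intro m k h
    exact (Icc_subset_bounds (K k).lo_le_hi (hanti m k h)).2
  set b := sSup (Set.range fun m => (K m).lo) with hb
  set d := sInf (Set.range fun m => (K m).hi) with hd
  have hne : (Set.range fun m => (K m).lo).Nonempty := ⟨_, ⟨0, rfl⟩⟩
  have hne' : (Set.range fun m => (K m).hi).Nonempty := ⟨_, ⟨0, rfl⟩⟩
  have hbdd : BddAbove (Set.range fun m => (K m).lo) := ⟨(K 0).hi, by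
    rintro _ ⟨m, rfl⟩; exact hbound m 0⟩
  have hbdd' : BddBelow (Set.range fun m => (K m).hi) := ⟨(K 0).lo, by
    rintro _ ⟨m, rfl⟩; exact hbound 0 m⟩
  have hbmem : b ∈ ⋂ m, (K m).set := by
    apply Set.mem_iInter.mpr
    intro m
    constructor
    · exact le_csSup hbdd ⟨m, rfl⟩
    · exact csSup_le hne (by rintro _ ⟨k, rfl⟩; exact hbound k m)
  have hdmem : d ∈ ⋂ m, (K m).set := by
    apply Set.mem_iInter.mpr
    intro m
    constructor
    · exact le_csInf hne' (by rintro _ ⟨k, rfl⟩; exact hbound m k)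
    · exact csInf_le hbdd' ⟨m, rfl⟩
  rw [hint] at hbmem hdmem
  have hbc : b = c := hbmem
  have hdc : d = c := hdmem
  obtain ⟨_, ⟨m₁, rfl⟩, hm₁⟩ := exists_lt_of_lt_csSup hne (by linarith : c - ε/2 < b)
  obtain ⟨_, ⟨m₂, rfl⟩, hm₂⟩ := exists_lt_of_csInf_lt hne' (by linarith : d < c + ε/2)
  refine ⟨max m₁ m₂, ?_⟩
  have h1 := hlo_mono m₁ (max m₁ m₂) (le_max_left _ _)
  have h2 := hhi_mono m₂ (max m₁ m₂) (le_max_right _ _)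
  unfold DI.diam
  linarith

/-- Well-definedness of the parameter of interval functions: for each output
accuracy `n` there is an input accuracy `N` working uniformly on `[0,1]`. -/
theorem interval_function_parameter_well_defined
    (f : ℝ → ℝ) (hf : ContinuousOn f (Set.Icc (0 : ℝ) 1))
    (ψ : DI → DI) (hmono : IntervalMonotone ψ) (hreal : Realizes ψ f) :
    ∀ n : ℕ, ∃ N : ℕ, ∀ J : DI, J.set ⊆ Set.Icc (0 : ℝ) 1 →
      J.diam ≤ (1 / 2 : ℝ) ^ N → (ψ J).diam ≤ (1 / 2 : ℝ) ^ n := by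
  intro n
  have key : ∀ x : ℝ, ∃ m : ℕ,
      x ∈ Set.Icc (0:ℝ) 1 → (ψ (Kint x (m))).diam ≤ (1/2:ℝ)^n := by
    intro x
    by_cases hx : x ∈ Set.Icc (0:ℝ) 1
    · obtain ⟨hnest, hint⟩ := hreal x hx (fun m => Kint x m)
        (fun m => Kint_nested x m) (Kint_iInter x)
      obtain ⟨m, hm⟩ := shrink (fun m => ψ (Kint x m)) (f x) hnest hint
        (by positivity : (0:ℝ) < (1/2:ℝ)^n)
      exact ⟨m, fun _ => hm⟩
    · exact ⟨0, fun h => absurd h hx⟩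
  choose M hM using key
  -- cover [0,1] by balls of radius (1/2)^(M x) / 2
  have hcover : Set.Icc (0:ℝ) 1 ⊆
      ⋃ x ∈ Set.Icc (0:ℝ) 1, Metric.ball x ((1/2:ℝ)^(M x) / 2) := by
    intro x hx
    exact Set.mem_biUnion hx (Metric.mem_ball_self (by positivity))
  obtain ⟨t, hts, htfin, htcov⟩ :=
    (isCompact_Icc : IsCompact (Set.Icc (0:ℝ) 1)).elim_finite_subcover_image
      (fun x _ => Metric.isOpen_ball) hcover
  -- choose N below all radii
  have hne : ((0:ℝ)) ∈ Set.Icc (0:ℝ) 1 := by norm_num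
  obtain ⟨x₀, hx₀t, hx₀b⟩ := Set.mem_iUnion₂.mp (htcov hne)
  set F := htfin.toFinset with hF
  have hFne : F.Nonempty := ⟨x₀, htfin.mem_toFinset.mpr hx₀t⟩
  set ε := F.inf' hFne (fun x => (1/2:ℝ)^(M x) / 2) with hε
  have hεpos : 0 < ε := by
    rw [hε, Finset.lt_inf'_iff]
    intro x _
    positivity
  obtain ⟨N, hN⟩ := exists_pow_lt_of_lt_one hεpos (by norm_num : (1/2:ℝ) < 1)
  refine ⟨N, fun J hJsub hJd => ?_⟩
  -- J.lo lies in some ball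
  have hlo : J.lo ∈ Set.Icc (0:ℝ) 1 := hJsub (Set.left_mem_Icc.mpr J.lo_le_hi)
  obtain ⟨x, hxt, hxb⟩ := Set.mem_iUnion₂.mp (htcov hlo)
  have hxF : x ∈ F := htfin.mem_toFinset.mpr hxt
  have hεle : ε ≤ (1/2:ℝ)^(M x) / 2 := Finset.inf'_le _ hxF
  have hball : |J.lo - x| < (1/2:ℝ)^(M x) / 2 := by
    simpa [Real.dist_eq] using hxb
  have hNle : (1/2:ℝ)^N < (1/2:ℝ)^(M x) / 2 := lt_of_lt_of_le hN hεle
  -- J.set ⊆ (Kint x (M x)).set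
  have hsub : J.set ⊆ (Kint x (M x)).set := by
    intro y hy
    apply Kint_subset
    have h1 : J.lo ≤ y := hy.1
    have h2 : y ≤ J.hi := hy.2
    have h3 : J.hi - J.lo ≤ (1/2:ℝ)^N := hJd
    obtain ⟨ha', hb'⟩ := abs_sub_le_iff.mp (le_of_lt hball)
    have hr : (0:ℝ) < (1/2:ℝ)^(M x) := by positivity
    exact ⟨by linarith, by linarith⟩
  have hψ : (ψ J).set ⊆ (ψ (Kint x (M x))).set := hmono _ _ hsub
  obtain ⟨ha, hb⟩ := Icc_subset_bounds (ψ J).lo_le_hi hψ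
  have := hM x (hts hxt)
  unfold DI.diam at *
  linarith
end

section
/- Let ψ : I𝔻 → I𝔻 be a monotone interval function realizing a continuous function f : [0,1] → ℝ (i.e., for every x ∈ [0,1] and every nested sequence (J_n) of dyadic intervals with intersection {x}, the sequence (ψ(J_n)) is nested with intersection {f(x)}). If ν(n) := min{N : ∀ J dyadic with diam(J) ≤ 2^{-N} and J ∩ [0,1] ≠ ∅, diam(ψ(J)) ≤ 2^{-n}} is well-defined, then the function n ↦ ν(n) + 1 is a modulus of continuity of f: |x − y| ≤ 2^{-ν(n)-1} implies |f(x) − f(y)| ≤ 2^{-n} for x, y ∈ [0,1]. -/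
/-!
Points `x ≤ y` with `|x - y| ≤ 2^-(ν n + 1)` lie in one dyadic interval `J` of diameter `2^-(ν n)`
meeting `[0,1]`, so `diam ψ(J) ≤ 2^-n` by the defining property of `ν n`. Both `f x` and `f y`
lie in `ψ(J)`: intersecting `J` with the dyadic grid intervals around `x` gives a nested name of
`x` whose first term lies in `J`, and `ψ` is monotone.
-/

namespace DI

noncomputable def ofInt (k l : ℤ) (n : ℕ) (h : k ≤ l) : DI where
  lo := k / 2 ^ n
  hi := l / 2 ^ n
  dyadic_lo := ⟨k, n, rfl⟩
  dyadic_hi := ⟨l, n, rfl⟩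
  lo_le_hi := by gcongr

lemma diam_ofInt (k l : ℤ) (n : ℕ) (h : k ≤ l) :
    (ofInt k l n h).diam = (l - k) / 2 ^ n :=
  (sub_div _ _ _).symm

noncomputable def inter (J K : DI) (h : max J.lo K.lo ≤ min J.hi K.hi) : DI where
  lo := max J.lo K.lo
  hi := min J.hi K.hi
  dyadic_lo := by
    rcases max_choice J.lo K.lo with e | e <;> rw [e]
    exacts [J.dyadic_lo, K.dyadic_lo]
  dyadic_hi := by
    rcases min_choice J.hi K.hi with e | e <;> rw [e]
    exacts [J.dyadic_hi, K.dyadic_hi]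
  lo_le_hi := h

lemma set_inter (J K : DI) (h : max J.lo K.lo ≤ min J.hi K.hi) :
    (J.inter K h).set = J.set ∩ K.set :=
  Set.Icc_inter_Icc.symm

lemma abs_sub_le_diam {J : DI} {a b : ℝ} (ha : a ∈ J.set) (hb : b ∈ J.set) :
    |a - b| ≤ J.diam :=
  Real.dist_le_of_mem_Icc ha hb

noncomputable def dyadicHull (x : ℝ) (n : ℕ) : DI :=
  ofInt ⌊x * 2 ^ n⌋ ⌈x * 2 ^ n⌉ n (Int.floor_le_ceil _)

lemma mem_dyadicHull (x : ℝ) (n : ℕ) : x ∈ (dyadicHull x n).set :=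
  ⟨(div_le_iff₀ (by positivity)).2 (Int.floor_le _),
    (le_div_iff₀ (by positivity)).2 (Int.le_ceil _)⟩

lemma dyadicHull_succ_subset (x : ℝ) (n : ℕ) :
    (dyadicHull x (n + 1)).set ⊆ (dyadicHull x n).set := by
  have h2 : (2 : ℝ) ^ (n + 1) = 2 ^ n * 2 := pow_succ 2 n
  have hscale (r : ℝ) : r / 2 ^ n = 2 * r / 2 ^ (n + 1) := by
    rw [h2]; field_simp
  have hlo : 2 * ⌊x * 2 ^ n⌋ ≤ ⌊x * 2 ^ (n + 1)⌋ := by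
    rw [Int.le_floor, h2]; push_cast; nlinarith [Int.floor_le (x * 2 ^ n)]
  have hhi : ⌈x * 2 ^ (n + 1)⌉ ≤ 2 * ⌈x * 2 ^ n⌉ := by
    rw [Int.ceil_le, h2]; push_cast; nlinarith [Int.le_ceil (x * 2 ^ n)]
  refine Set.Icc_subset_Icc ?_ ?_
  · change _ / _ ≤ _ / _
    rw [hscale]; gcongr; exact_mod_cast hlo
  · change _ / _ ≤ _ / _
    rw [hscale (⌈x * 2 ^ n⌉ : ℝ)]; gcongr; exact_mod_cast hhi

lemma diam_dyadicHull_le (x : ℝ) (n : ℕ) : (dyadicHull x n).diam ≤ (1 / 2) ^ n := by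
  rw [dyadicHull, diam_ofInt, one_div_pow]
  gcongr
  exact_mod_cast sub_left_le_of_le_add (Int.ceil_le_floor_add_one _)

lemma iInter_dyadicHull (x : ℝ) : ⋂ n, (dyadicHull x n).set = {x} := by
  refine Set.eq_singleton_iff_unique_mem.2 ⟨Set.mem_iInter.2 (mem_dyadicHull x), ?_⟩
  intro z hz
  refine eq_of_forall_dist_le fun ε hε => ?_
  obtain ⟨n, hn⟩ := exists_pow_lt_of_lt_one hε (by norm_num : (1 / 2 : ℝ) < 1)
  calc dist z x ≤ (dyadicHull x n).diam :=
        abs_sub_le_diam (Set.mem_iInter.1 hz n) (mem_dyadicHull x n)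
    _ ≤ ε := (diam_dyadicHull_le x n).trans hn.le

lemma exists_mem_mem_diam_le {x y : ℝ} {N : ℕ} (hxy : |x - y| ≤ (1 / 2) ^ (N + 1)) :
    ∃ J : DI, x ∈ J.set ∧ y ∈ J.set ∧ J.diam ≤ (1 / 2) ^ N := by
  wlog hle : x ≤ y generalizing x y
  · obtain ⟨J, hyJ, hxJ, hJ⟩ := this (by rwa [abs_sub_comm]) (le_of_not_ge hle)
    exact ⟨J, hxJ, hyJ, hJ⟩
  have hc : (0 : ℝ) < 2 ^ (N + 1) := by positivity
  have hy : y * 2 ^ (N + 1) ≤ x * 2 ^ (N + 1) + 1 := by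
    rw [abs_sub_comm, abs_of_nonneg (sub_nonneg.2 hle), one_div_pow, le_div_iff₀ hc] at hxy
    linarith
  refine ⟨ofInt ⌊x * 2 ^ (N + 1)⌋ (⌊x * 2 ^ (N + 1)⌋ + 2) (N + 1) (by omega), ?_, ?_, ?_⟩
  · exact ⟨(div_le_iff₀ hc).2 (Int.floor_le _),
      (le_div_iff₀ hc).2 (by push_cast; linarith [Int.lt_floor_add_one (x * 2 ^ (N + 1))])⟩
  · exact ⟨(div_le_iff₀ hc).2 (by nlinarith [Int.floor_le (x * 2 ^ (N + 1))]),
      (le_div_iff₀ hc).2 (by push_cast; linarith [Int.lt_floor_add_one (x * 2 ^ (N + 1))])⟩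
  · rw [diam_ofInt, one_div_pow, pow_succ]; push_cast; field_simp; norm_num

end DI

open DI in
lemma Realizes.apply_mem_of_mem {ψ : DI → DI} {f : ℝ → ℝ} (hreal : Realizes ψ f)
    (hmono : IntervalMonotone ψ) {x : ℝ} (hx : x ∈ Set.Icc (0 : ℝ) 1) {J : DI}
    (hxJ : x ∈ J.set) : f x ∈ (ψ J).set := by
  have hmeet (n : ℕ) : max J.lo (dyadicHull x n).lo ≤ min J.hi (dyadicHull x n).hi :=
    (max_le hxJ.1 (mem_dyadicHull x n).1).trans (le_min hxJ.2 (mem_dyadicHull x n).2)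
  set K : ℕ → DI := fun n => J.inter (dyadicHull x n) (hmeet n)
  have hK (n : ℕ) : (K n).set = J.set ∩ (dyadicHull x n).set := set_inter _ _ _
  have hnest (n : ℕ) : (K (n + 1)).set ⊆ (K n).set := by
    rw [hK, hK]; exact Set.inter_subset_inter_right _ (dyadicHull_succ_subset x n)
  have hshrink : ⋂ n, (K n).set = {x} := by
    simp only [hK, ← Set.inter_iInter, iInter_dyadicHull, Set.inter_eq_right,
      Set.singleton_subset_iff, hxJ]
  have hfx : f x ∈ ⋂ n, (ψ (K n)).set := by
    rw [(hreal x hx K hnest hshrink).2]; rfl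
  exact hmono (K 0) J (by rw [hK]; exact Set.inter_subset_left) (Set.mem_iInter.1 hfx 0)

theorem parameter_encodes_modulus_general
    (f : ℝ → ℝ)
    (ψ : DI → DI) (hmono : IntervalMonotone ψ) (hreal : Realizes ψ f)
    (ν : ℕ → ℕ)
    (hν : ∀ n, IsLeast
      {N : ℕ | ∀ J : DI, (J.set ∩ Set.Icc (0 : ℝ) 1).Nonempty →
        J.diam ≤ (1 / 2 : ℝ) ^ N → (ψ J).diam ≤ (1 / 2 : ℝ) ^ n} (ν n)) :
    ∀ x ∈ Set.Icc (0 : ℝ) 1, ∀ y ∈ Set.Icc (0 : ℝ) 1, ∀ n : ℕ,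
      |x - y| ≤ (1 / 2 : ℝ) ^ (ν n + 1) → |f x - f y| ≤ (1 / 2 : ℝ) ^ n := by
  intro x hx y hy n hxy
  obtain ⟨J, hxJ, hyJ, hJ⟩ := DI.exists_mem_mem_diam_le hxy
  calc |f x - f y| ≤ (ψ J).diam :=
        DI.abs_sub_le_diam (hreal.apply_mem_of_mem hmono hx hxJ) (hreal.apply_mem_of_mem hmono hy hyJ)
    _ ≤ (1 / 2) ^ n := (hν n).1 J ⟨x, hxJ, hx⟩ hJ

/-- The parameter of a monotone interval name of `f` encodes a modulus of uniform
continuity of `f`: `n ↦ ν(n) + 1` is a modulus of continuity. -/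
theorem parameter_encodes_modulus
    (f : ℝ → ℝ) (hf : ContinuousOn f (Set.Icc (0 : ℝ) 1))
    (ψ : DI → DI) (hmono : IntervalMonotone ψ) (hreal : Realizes ψ f)
    (ν : ℕ → ℕ)
    (hν : ∀ n, IsLeast
      {N : ℕ | ∀ J : DI, (J.set ∩ Set.Icc (0 : ℝ) 1).Nonempty →
        J.diam ≤ (1 / 2 : ℝ) ^ N → (ψ J).diam ≤ (1 / 2 : ℝ) ^ n} (ν n)) :
    ∀ x ∈ Set.Icc (0 : ℝ) 1, ∀ y ∈ Set.Icc (0 : ℝ) 1, ∀ n : ℕ,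
      |x - y| ≤ (1 / 2 : ℝ) ^ (ν n + 1) → |f x - f y| ≤ (1 / 2 : ℝ) ^ n :=
  parameter_encodes_modulus_general f ψ hmono hreal ν hν
end
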